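/- Let f_ν be the univariate Student's t density with ν > 0 degrees of freedom and scale parameter V > 0. Then for every β ≥ 0, (1/(1+β)) ∫_ℝ f_ν(z)^{1+β} dz ≤ 1 / ((1+β) V^{β/2} π^{β/2}); in particular this bound is independent of the degrees of freedom ν. -/

import Mathlib

open Real MeasureTheory

/-- Univariate Student's t density with `ν` degrees of freedom, location `μ` and scale `V`. -/
noncomputable def tDensity (ν μ V : ℝ) (z : ℝ) : ℝ :=
  Real.Gamma ((ν + 1) / 2) / (Real.Gamma (ν / 2) * Real.sqrt (ν * π * V)) *
    (1 + (z - μ) ^ 2 / (ν * V)) ^ (-(ν + 1) / 2)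

/-!
The density `f` is a probability density bounded by its value at `μ`, and log-convexity of `Γ`
gives `Γ((ν+1)/2) ≤ √ν Γ(ν/2)`, so that this peak value is at most `1/√(πV)` whatever `ν` is.
Hence `∫ f^(1+β) ≤ (πV)^(-β/2) ∫ f = (πV)^(-β/2)`. The normalisation `∫ f = 1` reduces, after an
affine change of variables, to `∫ (1 + u²)^(-s) du = √π Γ(s - 1/2) / Γ(s)`, which is the Beta
integral `B(1/2, s - 1/2)` under the substitution `x = u² / (1 + u²)`.
-/

open Set

theorem intervalIntegral_rpow_mul_one_sub_rpow {a b : ℝ} (ha : 0 < a) (hb : 0 < b) :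
    ∫ x in (0 : ℝ)..1, x ^ (a - 1) * (1 - x) ^ (b - 1) =
      Gamma a * Gamma b / Gamma (a + b) := by
  have hcast : Complex.betaIntegral a b =
      ↑(∫ x in (0 : ℝ)..1, x ^ (a - 1) * (1 - x) ^ (b - 1)) := by
    rw [Complex.betaIntegral, ← intervalIntegral.integral_ofReal]
    refine intervalIntegral.integral_congr fun x hx => ?_
    rw [uIcc_of_le zero_le_one] at hx
    push_cast [Complex.ofReal_cpow hx.1, Complex.ofReal_cpow (sub_nonneg.2 hx.2)]
    rfl
  rw [← ProbabilityTheory.beta, ProbabilityTheory.beta_eq_betaIntegralReal a b ha hb, hcast,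
    Complex.ofReal_re]

theorem Gamma_add_half_le_sqrt_mul_Gamma {x : ℝ} (hx : 0 < x) :
    Gamma (x + 1 / 2) ≤ √x * Gamma x := by
  have hΓ := (Gamma_pos_of_pos hx).le
  calc Gamma (x + 1 / 2) = Gamma (1 / 2 * x + 1 / 2 * (x + 1)) := by ring_nf
    _ ≤ Gamma x ^ (1 / 2 : ℝ) * Gamma (x + 1) ^ (1 / 2 : ℝ) :=
      Gamma_mul_add_mul_le_rpow_Gamma_mul_rpow_Gamma hx (by linarith) one_half_pos one_half_pos
        (add_halves 1)
    _ = √x * Gamma x := by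
      rw [Gamma_add_one hx.ne', mul_rpow hx.le hΓ, mul_left_comm, ← rpow_add' hΓ (by norm_num),
        add_halves, rpow_one, sqrt_eq_rpow]

theorem image_sq_div_one_add_sq_Ioi :
    (fun u : ℝ => u ^ 2 / (1 + u ^ 2)) '' Ioi 0 = Ioo 0 1 := by
  ext y
  constructor
  · rintro ⟨u, hu, rfl⟩
    have hu : 0 < u := hu
    exact ⟨by positivity, (div_lt_one (by positivity)).2 (by linarith)⟩
  · rintro ⟨hy0, hy1⟩
    have hy : 0 < 1 - y := by linarith
    refine ⟨√(y / (1 - y)), sqrt_pos.2 (by positivity), ?_⟩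
    simp only [sq_sqrt (by positivity : 0 ≤ y / (1 - y))]
    field_simp
    ring

theorem strictMonoOn_sq_div_one_add_sq :
    StrictMonoOn (fun u : ℝ => u ^ 2 / (1 + u ^ 2)) (Ici 0) := by
  intro u hu v hv huv
  have hu : 0 ≤ u := hu
  rw [div_lt_div_iff₀ (by positivity) (by positivity)]
  nlinarith [mul_self_lt_mul_self hu huv]

theorem hasDerivAt_sq_div_one_add_sq (u : ℝ) :
    HasDerivAt (fun u : ℝ => u ^ 2 / (1 + u ^ 2)) (2 * u / (1 + u ^ 2) ^ 2) u := by
  have hsq : HasDerivAt (fun u : ℝ => u ^ 2) (2 * u) u := by simpa using hasDerivAt_pow 2 u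
  exact (hsq.div (hsq.const_add 1) (by positivity)).congr_deriv (by ring)

theorem abs_deriv_smul_beta_integrand_sq_div_one_add_sq {s u : ℝ} (hu : 0 < u) :
    |2 * u / (1 + u ^ 2) ^ 2| •
        ((u ^ 2 / (1 + u ^ 2)) ^ ((1 / 2 : ℝ) - 1) * (1 - u ^ 2 / (1 + u ^ 2)) ^ (s - 1 / 2 - 1)) =
      2 * (1 + u ^ 2) ^ (-s) := by
  have ht : 0 < 1 + u ^ 2 := by positivity
  have hsqrt : (u ^ 2) ^ (1 / 2 : ℝ) = u := by rw [← sqrt_eq_rpow, sqrt_sq hu.le]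
  have hcompl : 1 - u ^ 2 / (1 + u ^ 2) = (1 + u ^ 2)⁻¹ := by field_simp; ring
  rw [abs_of_pos (by positivity), smul_eq_mul, hcompl, inv_rpow ht.le, ← rpow_neg ht.le,
    show (1 / 2 : ℝ) - 1 = -(1 / 2) by norm_num, rpow_neg (by positivity),
    div_rpow (by positivity) ht.le, hsqrt]
  have hexp : (1 + u ^ 2) ^ (1 / 2 : ℝ) * (1 + u ^ 2) ^ (-(s - 1 / 2 - 1)) =
      (1 + u ^ 2) ^ 2 * (1 + u ^ 2) ^ (-s) := by
    rw [← rpow_add ht, ← rpow_two (1 + u ^ 2), ← rpow_add ht]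
    ring_nf
  calc _ = 2 * u / (1 + u ^ 2) ^ 2 / u *
        ((1 + u ^ 2) ^ (1 / 2 : ℝ) * (1 + u ^ 2) ^ (-(s - 1 / 2 - 1))) := by
        rw [inv_div]; ring
    _ = 2 * (1 + u ^ 2) ^ (-s) := by
        rw [hexp]; field_simp

theorem integral_rpow_neg_one_add_sq {s : ℝ} (hs : 1 / 2 < s) :
    ∫ u : ℝ, (1 + u ^ 2) ^ (-s) = √π * Gamma (s - 1 / 2) / Gamma s := by
  have hsubst := integral_image_eq_integral_abs_deriv_smul measurableSet_Ioi
    (fun u _ => (hasDerivAt_sq_div_one_add_sq u).hasDerivWithinAt)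
    (strictMonoOn_sq_div_one_add_sq.injOn.mono Ioi_subset_Ici_self)
    (fun x : ℝ => x ^ ((1 / 2 : ℝ) - 1) * (1 - x) ^ (s - 1 / 2 - 1))
  rw [image_sq_div_one_add_sq_Ioi, ← integral_Ioc_eq_integral_Ioo,
    ← intervalIntegral.integral_of_le zero_le_one,
    intervalIntegral_rpow_mul_one_sub_rpow one_half_pos (by linarith),
    setIntegral_congr_fun measurableSet_Ioi
      (fun u hu => abs_deriv_smul_beta_integrand_sq_div_one_add_sq hu), integral_const_mul,
    Gamma_one_half_eq, add_sub_cancel] at hsubst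
  have hsymm : ∫ u : ℝ, (1 + u ^ 2) ^ (-s) = 2 * ∫ u in Ioi 0, (1 + u ^ 2) ^ (-s) := by
    rw [← integral_comp_abs (f := fun u : ℝ => (1 + u ^ 2) ^ (-s))]
    simp only [sq_abs]
  rw [hsymm, ← hsubst]

theorem integrable_rpow_neg_one_add_sq {s : ℝ} (hs : 1 / 2 < s) :
    Integrable fun u : ℝ => (1 + u ^ 2) ^ (-s) := by
  have h := integrable_rpow_neg_one_add_norm_sq (E := ℝ) (μ := volume) (r := 2 * s)
    (by rw [Module.finrank_self, Nat.cast_one]; linarith)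
  simpa only [norm_eq_abs, sq_abs, neg_div, mul_div_cancel_left₀ s two_ne_zero] using h

theorem integral_rpow_one_add_le_rpow_mul_integral {α : Type*} [MeasurableSpace α]
    {m : Measure α} {f : α → ℝ} {M β : ℝ} (hf : Integrable f m) (hf0 : ∀ x, 0 ≤ f x)
    (hfM : ∀ x, f x ≤ M) (hβ : 0 ≤ β) :
    ∫ x, f x ^ (1 + β) ∂m ≤ M ^ β * ∫ x, f x ∂m := by
  rw [← integral_const_mul]
  refine integral_mono_of_nonneg (ae_of_all _ fun x => rpow_nonneg (hf0 x) _)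
    (hf.const_mul _) (ae_of_all _ fun x => ?_)
  dsimp only
  rw [rpow_add' (hf0 x) (by linarith), rpow_one, mul_comm]
  exact mul_le_mul_of_nonneg_right (rpow_le_rpow (hf0 x) (hfM x) hβ) (hf0 x)

section tDensity

variable {ν V : ℝ}

theorem tDensity_eq (hν : 0 < ν) (hV : 0 < V) (μ z : ℝ) :
    tDensity ν μ V z = Gamma ((ν + 1) / 2) / (Gamma (ν / 2) * √(ν * π * V)) *
      (1 + ((z - μ) / √(ν * V)) ^ 2) ^ (-((ν + 1) / 2)) := by
  rw [tDensity, div_pow, sq_sqrt (by positivity), neg_div]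

theorem integrable_tDensity (hν : 0 < ν) (hV : 0 < V) (μ : ℝ) :
    Integrable (tDensity ν μ V) := by
  simp only [funext (tDensity_eq hν hV μ)]
  exact (((integrable_rpow_neg_one_add_sq (by linarith)).comp_div
    (by positivity)).comp_sub_right μ).const_mul _

theorem integral_tDensity (hν : 0 < ν) (hV : 0 < V) (μ : ℝ) :
    ∫ z, tDensity ν μ V z = 1 := by
  have hc : 0 < √(ν * V) := by positivity
  simp only [tDensity_eq hν hV μ]
  rw [integral_const_mul, integral_sub_right_eq_self (fun z => (1 + (z / √(ν * V)) ^ 2) ^ _) μ,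
    Measure.integral_comp_div (fun u => (1 + u ^ 2) ^ _),
    integral_rpow_neg_one_add_sq (by linarith), smul_eq_mul, abs_of_pos hc,
    show (ν + 1) / 2 - 1 / 2 = ν / 2 by ring, show ν * π * V = ν * V * π by ring, sqrt_mul (by positivity)]
  have := (Gamma_pos_of_pos (by linarith : 0 < (ν + 1) / 2)).ne'
  have := (Gamma_pos_of_pos (by linarith : 0 < ν / 2)).ne'
  field_simp

theorem tDensity_nonneg (hν : 0 < ν) (hV : 0 < V) (μ z : ℝ) : 0 ≤ tDensity ν μ V z := by
  rw [tDensity_eq hν hV]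
  positivity

theorem Gamma_div_Gamma_mul_sqrt_le_inv_sqrt (hν : 0 < ν) (hV : 0 < V) :
    Gamma ((ν + 1) / 2) / (Gamma (ν / 2) * √(ν * π * V)) ≤ (√(π * V))⁻¹ := by
  have hπV : 0 < √(π * V) := by positivity
  rw [div_le_iff₀ (by positivity), mul_assoc, sqrt_mul hν.le,
    show (√(π * V))⁻¹ * (Gamma (ν / 2) * (√ν * √(π * V))) = Gamma (ν / 2) * √ν by field_simp]
  calc Gamma ((ν + 1) / 2) = Gamma (ν / 2 + 1 / 2) := by ring_nf
    _ ≤ √(ν / 2) * Gamma (ν / 2) := Gamma_add_half_le_sqrt_mul_Gamma (half_pos hν)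
    _ ≤ Gamma (ν / 2) * √ν := by
      rw [mul_comm]; gcongr; linarith

theorem tDensity_le_inv_sqrt (hν : 0 < ν) (hV : 0 < V) (μ z : ℝ) :
    tDensity ν μ V z ≤ (√(π * V))⁻¹ := by
  have hpeak : (1 + ((z - μ) / √(ν * V)) ^ 2) ^ (-((ν + 1) / 2)) ≤ 1 :=
    rpow_le_one_of_one_le_of_nonpos (le_add_of_nonneg_right (sq_nonneg _)) (by linarith)
  rw [tDensity_eq hν hV]
  calc _ ≤ Gamma ((ν + 1) / 2) / (Gamma (ν / 2) * √(ν * π * V)) :=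
        mul_le_of_le_one_right (by positivity) hpeak
    _ ≤ (√(π * V))⁻¹ := Gamma_div_Gamma_mul_sqrt_le_inv_sqrt hν hV

end tDensity

theorem t_power_integral_bound_dof_free (ν μ V β : ℝ) (hν : 0 < ν) (hV : 0 < V) (hβ : 0 ≤ β) :
    (1 / (1 + β)) * ∫ z : ℝ, tDensity ν μ V z ^ (1 + β) ≤
      1 / ((1 + β) * V ^ (β / 2) * π ^ (β / 2)) := by
  have hpow : (√(π * V))⁻¹ ^ β = 1 / (V ^ (β / 2) * π ^ (β / 2)) := by
    rw [sqrt_eq_rpow, ← rpow_neg (by positivity), ← rpow_mul (by positivity),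
      show -(1 / 2) * β = -(β / 2) by ring, mul_rpow pi_pos.le hV.le, rpow_neg pi_pos.le,
      rpow_neg hV.le]
    field_simp
  calc (1 / (1 + β)) * ∫ z : ℝ, tDensity ν μ V z ^ (1 + β)
      ≤ (1 / (1 + β)) * ((√(π * V))⁻¹ ^ β * ∫ z, tDensity ν μ V z) := by
        gcongr
        exact integral_rpow_one_add_le_rpow_mul_integral (integrable_tDensity hν hV μ)
          (tDensity_nonneg hν hV μ) (tDensity_le_inv_sqrt hν hV μ) hβ
    _ = 1 / ((1 + β) * V ^ (β / 2) * π ^ (β / 2)) := by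
        rw [integral_tDensity hν hV, hpow]
        field_simp
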